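/- Let a>0, e∈[0,1), e_J∈[0,1), Θ∈ℝ. With the notation of the context, the double average of the quadrupole part of the disturbing-function expansion equals ⟨ M₁/(2ρ) − 3M₂²/(8ρ) ⟩ = −a²(3e² + 2)/(8(1 − e_J²)^{3/2}); in particular it does not depend on Θ. -/

import Mathlib

/-
The planet average of the quadrupole term, weighted by its Jacobian `ρ = 1 - e_J cos E_J`, sees
the asteroid only through its position `(X, Y)`. Using `x_J² + y_J² = ρ²` the weighted integrand
splits as `-(X² + Y²)/(4ρ²) - 3/4 (X² - Y²)(x_J² - y_J²)/ρ⁴ - 3 X Y x_J y_J/ρ⁴`. The last two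
terms have `2π`-periodic antiderivatives, so they average to zero, while
`∫ dE_J/ρ² = 2π/(1 - e_J²)^{3/2}` comes from the true anomaly, whose derivative in `E_J` is
`√(1 - e_J²)/ρ`. Rotation invariance gives `X² + Y² = a²(1 - e cos E)²`, and the outer average
reduces to `∫ (1 - e cos E)³ dE = π(2 + 3e²)`.
-/

open Real intervalIntegral

/-- Planar coordinates of the asteroid in its osculating frame. -/
noncomputable def xPrime (a e E : ℝ) : ℝ := a * (Real.cos E - e)
noncomputable def yPrime (a e E : ℝ) : ℝ := a * Real.sqrt (1 - e ^ 2) * Real.sin E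

/-- Asteroid coordinates rotated by Θ. -/
noncomputable def xA (a e Θ E : ℝ) : ℝ :=
  Real.cos Θ * xPrime a e E - Real.sin Θ * yPrime a e E
noncomputable def yA (a e Θ E : ℝ) : ℝ :=
  Real.sin Θ * xPrime a e E + Real.cos Θ * yPrime a e E

/-- Planet coordinates. -/
noncomputable def xJ (eJ EJ : ℝ) : ℝ := Real.cos EJ - eJ
noncomputable def yJ (eJ EJ : ℝ) : ℝ := Real.sqrt (1 - eJ ^ 2) * Real.sin EJ

/-- Distance from the star to the planet. -/
noncomputable def ρJ (eJ EJ : ℝ) : ℝ := Real.sqrt (xJ eJ EJ ^ 2 + yJ eJ EJ ^ 2)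

noncomputable def M₁ (a e eJ Θ E EJ : ℝ) : ℝ :=
  (xA a e Θ E ^ 2 + yA a e Θ E ^ 2) / ρJ eJ EJ ^ 2

noncomputable def M₂ (a e eJ Θ E EJ : ℝ) : ℝ :=
  -2 * (xA a e Θ E * xJ eJ EJ + yA a e Θ E * yJ eJ EJ) / ρJ eJ EJ ^ 2

/-- Double average over mean anomalies, expressed via eccentric anomalies with Jacobians. -/
noncomputable def davg (e eJ : ℝ) (f : ℝ → ℝ → ℝ) : ℝ :=
  (1 / (4 * Real.pi ^ 2)) *
    ∫ E in (0:ℝ)..(2 * Real.pi), ∫ EJ in (0:ℝ)..(2 * Real.pi),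
      f E EJ * (1 - e * Real.cos E) * (1 - eJ * Real.cos EJ)

@[fun_prop]
lemma continuous_xJ (e : ℝ) : Continuous (xJ e) := by unfold xJ; fun_prop

@[fun_prop]
lemma continuous_yJ (e : ℝ) : Continuous (yJ e) := by unfold yJ; fun_prop

lemma xA_sq_add_yA_sq (a e Θ E : ℝ) :
    xA a e Θ E ^ 2 + yA a e Θ E ^ 2 = xPrime a e E ^ 2 + yPrime a e E ^ 2 := by
  simp only [xA, yA]
  linear_combination (xPrime a e E ^ 2 + yPrime a e E ^ 2) * sin_sq_add_cos_sq Θ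

lemma hasDerivAt_one_sub_mul_cos (e t : ℝ) :
    HasDerivAt (fun t => 1 - e * cos t) (e * sin t) t := by
  simpa using ((hasDerivAt_cos t).const_mul e).const_sub 1

section Ellipse

variable {e : ℝ}

lemma one_sub_sq_pos (he : |e| < 1) : 0 < 1 - e ^ 2 :=
  sub_pos.2 ((sq_lt_one_iff_abs_lt_one e).2 he)

lemma one_sub_mul_cos_pos (he : |e| < 1) (t : ℝ) : 0 < 1 - e * cos t := by
  have : |e * cos t| ≤ |e| := by
    rw [abs_mul]; exact mul_le_of_le_one_right (abs_nonneg e) (abs_cos_le_one t)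
  linarith [le_abs_self (e * cos t)]

lemma cos_sub_sq_add_sqrt_mul_sin_sq (he : e ^ 2 ≤ 1) (t : ℝ) :
    (cos t - e) ^ 2 + (√(1 - e ^ 2) * sin t) ^ 2 = (1 - e * cos t) ^ 2 := by
  rw [mul_pow, sq_sqrt (by linarith)]
  linear_combination (1 - e ^ 2) * sin_sq_add_cos_sq t

lemma xPrime_sq_add_yPrime_sq (he : e ^ 2 ≤ 1) (a E : ℝ) :
    xPrime a e E ^ 2 + yPrime a e E ^ 2 = a ^ 2 * (1 - e * cos E) ^ 2 := by
  rw [← cos_sub_sq_add_sqrt_mul_sin_sq he]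
  simp only [xPrime, yPrime]
  ring

lemma ρJ_eq (he : |e| ≤ 1) (t : ℝ) : ρJ e t = 1 - e * cos t := by
  obtain ⟨h₁, h₂⟩ := abs_le.1 he
  rw [ρJ, xJ, yJ, cos_sub_sq_add_sqrt_mul_sin_sq (by nlinarith),
    sqrt_sq (by nlinarith [neg_one_le_cos t, cos_le_one t])]

lemma ρJ_pos (he : |e| < 1) (t : ℝ) : 0 < ρJ e t :=
  ρJ_eq he.le t ▸ one_sub_mul_cos_pos he t

lemma intervalIntegrable_div_ρJ_pow (he : |e| < 1) {f : ℝ → ℝ} (hf : Continuous f) (n : ℕ)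
    (a b : ℝ) : IntervalIntegrable (fun t => f t / ρJ e t ^ n) MeasureTheory.volume a b := by
  refine (hf.div ?_ fun t => (pow_pos (ρJ_pos he t) n).ne').intervalIntegrable a b
  simp only [ρJ_eq he.le]
  fun_prop

/-- The true anomaly of a Kepler ellipse of eccentricity `e`, as a function of the eccentric
anomaly `t`. -/
noncomputable def trueAnomaly (e t : ℝ) : ℝ :=
  t + 2 * arctan (e / (1 + √(1 - e ^ 2)) * sin t / (1 - e / (1 + √(1 - e ^ 2)) * cos t))

lemma hasDerivAt_trueAnomaly (he : |e| < 1) (t : ℝ) :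
    HasDerivAt (trueAnomaly e) (√(1 - e ^ 2) / (1 - e * cos t)) t := by
  have he2 := one_sub_sq_pos he
  set m := √(1 - e ^ 2)
  have hm2 : m ^ 2 = 1 - e ^ 2 := sq_sqrt he2.le
  have hm0 : 0 < m := sqrt_pos.2 he2
  set b := e / (1 + m)
  have hb : |b| < 1 := by
    rw [abs_div, abs_of_pos (by linarith : (0:ℝ) < 1 + m), div_lt_one (by linarith)]; linarith
  have hbe : b * (1 + m) = e := div_mul_cancel₀ e (by positivity)
  have hw := one_sub_mul_cos_pos he t
  have hwb := one_sub_mul_cos_pos hb t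
  have hquot : HasDerivAt (fun u => b * sin u / (1 - b * cos u))
      ((b * cos t * (1 - b * cos t) - b * sin t * (b * sin t)) / (1 - b * cos t) ^ 2) t :=
    ((hasDerivAt_sin t).const_mul b).div (hasDerivAt_one_sub_mul_cos b t) hwb.ne'
  refine ((hasDerivAt_id' t).add (hquot.arctan.const_mul 2)).congr_deriv ?_
  clear_value m b
  subst hbe
  -- `b` is the tangent of half the angle whose sine is `e`, so `b ^ 2 (1 + m) = 1 - m`
  have hb2 : b ^ 2 * (1 + m) = 1 - m := by
    have : (b ^ 2 * (1 + m) - (1 - m)) * (1 + m) = 0 := by linear_combination hm2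
    linarith [(mul_eq_zero.1 this).resolve_right (by positivity)]
  rw [div_pow, one_add_div (by positivity)]
  field_simp
  rw [eq_div_iff (by linarith)]
  linear_combination (-b ^ 2 * (1 - b * (1 + m) * cos t) - b ^ 2 * m) * sin_sq_add_cos_sq t
    + (b * cos t - 1) * hb2

lemma integral_inv_ρJ_sq (he : |e| < 1) :
    ∫ t in 0..2 * π, 1 / ρJ e t ^ 2 = 2 * π / √(1 - e ^ 2) ^ 3 := by
  have he2 := one_sub_sq_pos he
  set m := √(1 - e ^ 2) with hm
  have hm2 : m ^ 2 = 1 - e ^ 2 := sq_sqrt he2.le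
  have hm0 : 0 < m := sqrt_pos.2 he2
  -- with `w = 1 - e cos t`: `(sin t / w)' = (cos t - e) / w ^ 2`
  -- and `1 / w ^ 2 = (1 / w + e (cos t - e) / w ^ 2) / m ^ 2`
  have hderiv : ∀ t, HasDerivAt
      (fun t => (trueAnomaly e t / m + e * sin t / (1 - e * cos t)) / m ^ 2)
      (1 / ρJ e t ^ 2) t := by
    intro t
    have hw := one_sub_mul_cos_pos he t
    have := (((hasDerivAt_trueAnomaly he t).div_const m).add (((hasDerivAt_sin t).const_mul e).div
      (hasDerivAt_one_sub_mul_cos e t) hw.ne')).div_const (m ^ 2)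
    rw [← hm] at this
    refine this.congr_deriv ?_
    rw [ρJ_eq he.le]
    field_simp
    rw [sin_sq, hm2]
    ring
  rw [integral_eq_sub_of_hasDerivAt (fun t _ => hderiv t)
    (intervalIntegrable_div_ρJ_pow he continuous_const 2 _ _)]
  simp [trueAnomaly]
  field_simp

lemma integral_xJ_sq_sub_yJ_sq_div_ρJ_pow_four (he : |e| < 1) :
    ∫ t in 0..2 * π, (xJ e t ^ 2 - yJ e t ^ 2) / ρJ e t ^ 4 = 0 := by
  have hderiv : ∀ t, HasDerivAt
      (fun t => sin t * (3 * cos t - 2 * e - e * cos t ^ 2) / (3 * (1 - e * cos t) ^ 3))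
      ((xJ e t ^ 2 - yJ e t ^ 2) / ρJ e t ^ 4) t := by
    intro t
    have hw := one_sub_mul_cos_pos he t
    have hw' := hasDerivAt_one_sub_mul_cos e t
    refine ((hasDerivAt_sin t).fun_mul
      ((((hasDerivAt_cos t).const_mul 3).sub_const (2 * e)).fun_sub
        (((hasDerivAt_cos t).fun_pow 2).const_mul e))).fun_div ((hw'.fun_pow 3).const_mul 3)
      (by positivity) |>.congr_deriv ?_
    rw [ρJ_eq he.le, xJ, yJ, mul_pow (√(1 - e ^ 2)), 
      sq_sqrt (one_sub_sq_pos he).le]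
    field_simp
    rw [div_eq_div_iff (pow_pos (by linarith) _).ne' (pow_pos (by linarith) _).ne', sin_sq]
    push_cast
    ring
  rw [integral_eq_sub_of_hasDerivAt (fun t _ => hderiv t) (intervalIntegrable_div_ρJ_pow he
    (f := fun t => xJ e t ^ 2 - yJ e t ^ 2) (by fun_prop) 4 _ _)]
  simp

lemma integral_xJ_mul_yJ_div_ρJ_pow_four (he : |e| < 1) :
    ∫ t in 0..2 * π, xJ e t * yJ e t / ρJ e t ^ 4 = 0 := by
  have hderiv : ∀ t, HasDerivAt
      (fun t => √(1 - e ^ 2) * (e * cos t ^ 3 - 3 * cos t ^ 2 + 2) / (6 * (1 - e * cos t) ^ 3))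
      (xJ e t * yJ e t / ρJ e t ^ 4) t := by
    intro t
    have hw := one_sub_mul_cos_pos he t
    have hw' := hasDerivAt_one_sub_mul_cos e t
    refine (((((hasDerivAt_cos t).fun_pow 3).const_mul e).fun_sub
      (((hasDerivAt_cos t).fun_pow 2).const_mul 3) |>.add_const 2).const_mul (√(1 - e ^ 2))).fun_div
      ((hw'.fun_pow 3).const_mul 6) (by positivity) |>.congr_deriv ?_
    rw [ρJ_eq he.le, xJ, yJ]
    field_simp
    ring
  rw [integral_eq_sub_of_hasDerivAt (fun t _ => hderiv t) (intervalIntegrable_div_ρJ_pow he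
    (f := fun t => xJ e t * yJ e t) (by fun_prop) 4 _ _)]
  simp

lemma integral_quadrupole_mul_one_sub_mul_cos (he : |e| < 1) (X Y : ℝ) :
    ∫ t in 0..2 * π, ((X ^ 2 + Y ^ 2) / ρJ e t ^ 2 / (2 * ρJ e t)
      - 3 * (-2 * (X * xJ e t + Y * yJ e t) / ρJ e t ^ 2) ^ 2 / (8 * ρJ e t)) * (1 - e * cos t)
      = -π * (X ^ 2 + Y ^ 2) / (2 * √(1 - e ^ 2) ^ 3) := by
  have hsplit : ∀ t, ((X ^ 2 + Y ^ 2) / ρJ e t ^ 2 / (2 * ρJ e t)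
      - 3 * (-2 * (X * xJ e t + Y * yJ e t) / ρJ e t ^ 2) ^ 2 / (8 * ρJ e t)) * (1 - e * cos t)
      = -(X ^ 2 + Y ^ 2) / 4 * (1 / ρJ e t ^ 2)
        - 3 / 4 * (X ^ 2 - Y ^ 2) * ((xJ e t ^ 2 - yJ e t ^ 2) / ρJ e t ^ 4)
        - 3 * X * Y * (xJ e t * yJ e t / ρJ e t ^ 4) := by
    intro t
    have hρ := ρJ_pos he t
    have hρ2 : ρJ e t ^ 2 = xJ e t ^ 2 + yJ e t ^ 2 := sq_sqrt (by positivity)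
    rw [← ρJ_eq he.le t]
    field_simp
    linear_combination 48 * (X ^ 2 + Y ^ 2) * hρ2
  have hI₁ := intervalIntegrable_div_ρJ_pow he (f := fun _ => 1) (by fun_prop) 2 0 (2 * π)
  have hI₂ := intervalIntegrable_div_ρJ_pow he
    (f := fun t => xJ e t ^ 2 - yJ e t ^ 2) (by fun_prop) 4 0 (2 * π)
  have hI₃ := intervalIntegrable_div_ρJ_pow he
    (f := fun t => xJ e t * yJ e t) (by fun_prop) 4 0 (2 * π)
  simp_rw [hsplit]
  rw [integral_sub ((hI₁.const_mul _).sub (hI₂.const_mul _)) (hI₃.const_mul _),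
    integral_sub (hI₁.const_mul _) (hI₂.const_mul _), integral_const_mul, integral_const_mul,
    integral_const_mul, integral_inv_ρJ_sq he, integral_xJ_sq_sub_yJ_sq_div_ρJ_pow_four he,
    integral_xJ_mul_yJ_div_ρJ_pow_four he]
  ring

end Ellipse

lemma integral_one_sub_mul_cos_pow_three (e : ℝ) :
    ∫ t in 0..2 * π, (1 - e * cos t) ^ 3 = π * (2 + 3 * e ^ 2) := by
  have hexp : ∀ t, (1 - e * cos t) ^ 3
      = 1 - 3 * e * cos t + 3 * e ^ 2 * cos t ^ 2 - e ^ 3 * cos t ^ 3 := fun t => by ring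
  simp_rw [hexp]
  rw [integral_sub, integral_add, integral_sub]
  · simp
    ring
  all_goals exact Continuous.intervalIntegrable (by fun_prop) _ _

theorem doubleAveraged_quadrupole_term_general
    (a e eJ Θ : ℝ) (he0 : 0 ≤ e) (he1 : e < 1)
    (heJ0 : 0 ≤ eJ) (heJ1 : eJ < 1) :
    davg e eJ (fun E EJ =>
      M₁ a e eJ Θ E EJ / (2 * ρJ eJ EJ) - 3 * M₂ a e eJ Θ E EJ ^ 2 / (8 * ρJ eJ EJ))
    = -a ^ 2 * (3 * e ^ 2 + 2) / (8 * (1 - eJ ^ 2) ^ ((3:ℝ) / 2)) := by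
  have heJ : |eJ| < 1 := abs_lt.2 ⟨by linarith, heJ1⟩
  have hinner : ∀ E, ∫ EJ in 0..2 * π, (M₁ a e eJ Θ E EJ / (2 * ρJ eJ EJ)
      - 3 * M₂ a e eJ Θ E EJ ^ 2 / (8 * ρJ eJ EJ)) * (1 - e * cos E) * (1 - eJ * cos EJ)
      = -π * a ^ 2 / (2 * √(1 - eJ ^ 2) ^ 3) * (1 - e * cos E) ^ 3 := by
    intro E
    simp_rw [mul_right_comm _ (1 - e * cos E)]
    rw [integral_mul_const]
    simp only [M₁, M₂]
    rw [integral_quadrupole_mul_one_sub_mul_cos heJ, xA_sq_add_yA_sq,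
      xPrime_sq_add_yPrime_sq (by nlinarith)]
    ring
  rw [davg]
  simp_rw [hinner]
  have heJ2 := one_sub_sq_pos heJ
  rw [integral_const_mul, integral_one_sub_mul_cos_pow_three,
    rpow_div_two_eq_sqrt _ heJ2.le, rpow_ofNat]
  have : 0 < √(1 - eJ ^ 2) := sqrt_pos.2 heJ2
  field_simp
  ring

theorem doubleAveraged_quadrupole_term
    (a e eJ Θ : ℝ) (ha : 0 < a) (he0 : 0 ≤ e) (he1 : e < 1)
    (heJ0 : 0 ≤ eJ) (heJ1 : eJ < 1) :
    davg e eJ (fun E EJ =>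
      M₁ a e eJ Θ E EJ / (2 * ρJ eJ EJ) - 3 * M₂ a e eJ Θ E EJ ^ 2 / (8 * ρJ eJ EJ))
    = -a ^ 2 * (3 * e ^ 2 + 2) / (8 * (1 - eJ ^ 2) ^ ((3:ℝ) / 2)) :=
  doubleAveraged_quadrupole_term_general a e eJ Θ he0 he1 heJ0 heJ1
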